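/- Suppose a system admits a bounded storage function λ and class-K∞ function α such that along every optimal trajectory of horizon N, λ(x*(k+1)) − λ(x*(k)) ≤ −α(‖z*(k) − z̄‖) + ℓ(z*(k)) − ℓ(z̄) for all k, and suppose the optimal cost satisfies Σ_{k=0}^{N−1} ℓ(z*(k)) ≤ N·ℓ(z̄) + C₀ for a constant C₀ independent of N (e.g., via exponential reachability of x̄). Then for every ε > 0, the number of indices k ∈ {0,…,N−1} with ‖z*(k) − z̄‖ > ε is at most (C₀ + 2·sup|λ|)/α(ε), i.e., the turnpike property holds with constant C = C₀ + 2·sup|λ|. -/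
import Mathlib


/-- Turnpike property from dissipation along optimal trajectories plus a cost
bound.  `z k` is the optimal triplet at time `k` (in a normed space), `lam k`
is the storage evaluated along the optimal state trajectory, bounded by `L`.
If the dissipation inequality holds along the trajectory and the optimal cost
satisfies `Σ_{k<N} ℓ(z k) ≤ N·ℓ(z̄) + C₀`, then for every `ε > 0` the number
of indices with `‖z k - z̄‖ > ε` is at most `(C₀ + 2L)/α(ε)`. -/
theorem turnpike_of_dissipativity_and_cost_bound
    {E : Type*} [NormedAddCommGroup E]
    (N : ℕ) (z : ℕ → E) (zbar : E) (ℓ : E → ℝ)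
    (lam : ℕ → ℝ) (L C₀ : ℝ)
    (α : ℝ → ℝ) (hα0 : α 0 = 0) (hαmono : StrictMonoOn α (Set.Ici 0))
    (hαcont : Continuous α) (hαinf : Filter.Tendsto α Filter.atTop Filter.atTop)
    (hlamBdd : ∀ k, |lam k| ≤ L)
    (hdiss : ∀ k < N, lam (k + 1) - lam k ≤ -α ‖z k - zbar‖ + ℓ (z k) - ℓ zbar)
    (hcost : ∑ k ∈ Finset.range N, ℓ (z k) ≤ (N : ℝ) * ℓ zbar + C₀) :
    ∀ ε : ℝ, 0 < ε →
      (({k | k < N ∧ ε < ‖z k - zbar‖} : Set ℕ).ncard : ℝ) ≤ (C₀ + 2 * L) / α ε := by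
  intro ε hε
  have hαnonneg : ∀ t : ℝ, 0 ≤ t → 0 ≤ α t := by
    intro t ht
    rcases eq_or_lt_of_le ht with h | h
    · simp [← h, hα0]
    · have := hαmono (Set.self_mem_Ici) (le_of_lt h) h
      linarith [hα0]
  have hαε : 0 < α ε := by
    have := hαmono (Set.self_mem_Ici) (le_of_lt hε) hε
    linarith [hα0]
  -- telescoping sum bound
  have htel : lam N - lam 0 = ∑ k ∈ Finset.range N, (lam (k + 1) - lam k) :=
    (Finset.sum_range_sub lam N).symm
  have hsum1 : ∑ k ∈ Finset.range N, (lam (k + 1) - lam k) ≤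
      ∑ k ∈ Finset.range N, (-α ‖z k - zbar‖ + ℓ (z k) - ℓ zbar) := by
    apply Finset.sum_le_sum
    intro k hk
    exact hdiss k (Finset.mem_range.mp hk)
  have hsum2 : ∑ k ∈ Finset.range N, (-α ‖z k - zbar‖ + ℓ (z k) - ℓ zbar) =
      -(∑ k ∈ Finset.range N, α ‖z k - zbar‖) + (∑ k ∈ Finset.range N, ℓ (z k))
        - (N : ℝ) * ℓ zbar := by
    rw [Finset.sum_sub_distrib, Finset.sum_add_distrib, ← Finset.sum_neg_distrib]
    simp [mul_comm]
  have hkey : ∑ k ∈ Finset.range N, α ‖z k - zbar‖ ≤ C₀ + 2 * L := by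
    have h0 := hlamBdd 0
    have hN := hlamBdd N
    rw [hsum2] at hsum1
    rw [← htel] at hsum1
    have := abs_le.mp h0
    have := abs_le.mp hN
    linarith
  -- the bad set as a finset
  set S : Finset ℕ := (Finset.range N).filter (fun k => ε < ‖z k - zbar‖) with hS
  have hset : ({k | k < N ∧ ε < ‖z k - zbar‖} : Set ℕ) = ↑S := by
    ext k; simp [hS]
  rw [hset, Set.ncard_coe_finset]
  have hcard : (S.card : ℝ) * α ε ≤ ∑ k ∈ S, α ‖z k - zbar‖ := by
    have := Finset.card_nsmul_le_sum S (fun k => α ‖z k - zbar‖) (α ε) ?_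
    · simpa [nsmul_eq_mul] using this
    · intro k hk
      rw [hS, Finset.mem_filter] at hk
      exact le_of_lt (hαmono (le_of_lt hε) (norm_nonneg _) hk.2)
  have hsub : ∑ k ∈ S, α ‖z k - zbar‖ ≤ ∑ k ∈ Finset.range N, α ‖z k - zbar‖ := by
    apply Finset.sum_le_sum_of_subset_of_nonneg (Finset.filter_subset _ _)
    intro k _ _
    exact hαnonneg _ (norm_nonneg _)
  rw [le_div_iff₀ hαε]
  calc (S.card : ℝ) * α ε ≤ ∑ k ∈ S, α ‖z k - zbar‖ := hcard
    _ ≤ ∑ k ∈ Finset.range N, α ‖z k - zbar‖ := hsub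
    _ ≤ C₀ + 2 * L := hkey
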